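/- arXiv:1007.4356 — 6 statements merged into one kernel-verified Lean document; each statement's English description precedes it below -/
import Mathlib

section
/- Let N be an admissible algebra (finite-dimensional nilpotent commutative associative ℂ-algebra with one-dimensional annihilator), N⁰ = ℂ ⊕ N its unital extension, and π : N⁰ → Ann(N) a linear projection with range Ann(N), π(N) ⊆ Ann(N), π restricted to Ann(N) the identity, and π(1) = 0. Then the Ann(N)-valued symmetric bilinear form b_π(u,v) := π(uv) on N⁰ is non-degenerate. -/
open Finset

/-- Annihilator `Ann(N) = {u ∈ N : uN = 0}` of a non-unital commutative ℂ-algebra. -/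
def annN (N : Type*) [NonUnitalCommRing N] [Module ℂ N] [IsScalarTower ℂ N N] :
    Submodule ℂ N where
  carrier := {u | ∀ v : N, u * v = 0}
  add_mem' := fun ha hb v => by rw [add_mul, ha v, hb v, add_zero]
  zero_mem' := fun v => zero_mul v
  smul_mem' := fun c a ha v => by rw [smul_mul_assoc, ha v, smul_zero]

/-- The descending chain of ideals: `npow N j` is `N^j` for `j ≥ 1`
(`N^1 = N`, `N^{j+1} = span(N·N^j)`; `npow N 0 := ⊤` by convention). -/
def npow (N : Type*) [NonUnitalCommRing N] [Module ℂ N] : ℕ → Submodule ℂ N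
  | 0 => ⊤
  | 1 => ⊤
  | (j+2) => Submodule.span ℂ {x : N | ∃ u : N, ∃ v ∈ npow N (j+1), x = u * v}

/-- Powers `u^m` of an element in a non-unital commutative ring
(`upow u 0 := 0` by convention; only `m ≥ 1` is used). -/
def upow {N : Type*} [NonUnitalCommRing N] (u : N) : ℕ → N
  | 0 => 0
  | 1 => u
  | (m+2) => u * upow u (m+1)

/-!
Pairing `u` with a nonzero `e ∈ Ann(N)` gives `π(u e) = u₀ • e`, so the scalar part `u₀` of `u`
vanishes. A nonzero `x ∈ N` that is not in `Ann(N)` has a nonzero multiple `x y` one step deeper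
in the chain `N^k`; since `N^(ν+1) = 0`, iterating reaches a nonzero element of `Ann(N)` of the
form `x y`, on which `π` is the identity.
-/

section

variable {N : Type*} [NonUnitalCommRing N] [Module ℂ N]

lemma mul_mem_npow_succ {k : ℕ} (y : N) {x : N} (hx : x ∈ npow N k) :
    y * x ∈ npow N (k + 1) := by
  match k with
  | 0 => exact Submodule.mem_top
  | k + 1 => exact Submodule.subset_span ⟨y, x, hx, rfl⟩

variable [IsScalarTower ℂ N N]

lemma mem_annN_iff {x : N} : x ∈ annN N ↔ ∀ v : N, x * v = 0 := Iff.rfl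

lemma mul_coe_of_mem_annN (u : Unitization ℂ N) {e : N} (he : e ∈ annN N) :
    u * (e : Unitization ℂ N) = ((u.fst • e : N) : Unitization ℂ N) := by
  have hse : u.snd * e = 0 := by rw [mul_comm]; exact he u.snd
  ext <;> simp [Unitization.snd_mul, hse]

variable [SMulCommClass ℂ N N]

lemma exists_mul_mem_annN_ne_zero_of_mem_npow {ν : ℕ} (hnil : npow N (ν + 1) = ⊥) :
    ∀ n k, n + k = ν + 1 → ∀ x ∈ npow N k, x ≠ 0 →
      ∃ y : Unitization ℂ N, ∃ z ∈ annN N, z ≠ 0 ∧ (x : Unitization ℂ N) * y = z := by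
  intro n
  induction n with
  | zero =>
    rintro k hk x hx hx0
    rw [zero_add] at hk
    rw [hk, hnil, Submodule.mem_bot] at hx
    exact absurd hx hx0
  | succ n ih =>
    intro k hk x hx hx0
    by_cases hxA : x ∈ annN N
    · exact ⟨1, x, hxA, hx0, mul_one _⟩
    obtain ⟨y, hxy⟩ : ∃ y, x * y ≠ 0 := by simpa [mem_annN_iff] using hxA
    have hxy_mem : x * y ∈ npow N (k + 1) := mul_comm y x ▸ mul_mem_npow_succ y hx
    obtain ⟨y', z, hzA, hz0, hz⟩ := ih (k + 1) (by omega) (x * y) hxy_mem hxy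
    exact ⟨y * y', z, hzA, hz0, by rw [← mul_assoc, ← Unitization.inr_mul, hz]⟩

lemma exists_mul_mem_annN_ne_zero {ν : ℕ} (hnil : npow N (ν + 1) = ⊥) {x : N} (hx0 : x ≠ 0) :
    ∃ y : Unitization ℂ N, ∃ z ∈ annN N, z ≠ 0 ∧ (x : Unitization ℂ N) * y = z :=
  exists_mul_mem_annN_ne_zero_of_mem_npow hnil (ν + 1) 0 rfl x Submodule.mem_top hx0

end

theorem stmt2_general (N : Type*) [NonUnitalCommRing N] [Module ℂ N] [SMulCommClass ℂ N N]
    [IsScalarTower ℂ N N]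
    (ν : ℕ) (hnil : npow N (ν + 1) = ⊥) (hann : Module.finrank ℂ (annN N) = 1)
    (π : Unitization ℂ N →ₗ[ℂ] N)
    (hid : ∀ u ∈ annN N, π (Unitization.inr u : Unitization ℂ N) = u) :
    ∀ u : Unitization ℂ N, (∀ v : Unitization ℂ N, π (u * v) = 0) → u = 0 := by
  intro u hu
  obtain ⟨e, heA, he0⟩ := Submodule.exists_mem_ne_zero_of_ne_bot (p := annN N) fun h => by
    rw [h, finrank_bot] at hann
    exact zero_ne_one hann
  have hfst : u.fst = 0 := by
    have := hu (e : Unitization ℂ N)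
    rw [mul_coe_of_mem_annN u heA, hid _ (Submodule.smul_mem _ _ heA)] at this
    exact (smul_eq_zero.mp this).resolve_right he0
  have hu_eq : u = (u.snd : Unitization ℂ N) := by ext <;> simp [hfst]
  by_contra hu0
  have hsnd : u.snd ≠ 0 := fun h => hu0 (by rw [hu_eq, h, Unitization.inr_zero])
  obtain ⟨y, z, hzA, hz0, hz⟩ := exists_mul_mem_annN_ne_zero hnil hsnd
  have := hu y
  rw [hu_eq, hz, hid z hzA] at this
  exact hz0 this

/-- For an admissible algebra `N` with unital extension `N⁰ = ℂ ⊕ N`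
(`Unitization ℂ N`) and an admissible projection `π : N⁰ → Ann(N)` (range in `Ann(N)`,
identity on `Ann(N)`, `π(1) = 0`), the `Ann(N)`-valued symmetric bilinear form
`b_π(u,v) = π(uv)` on `N⁰` is non-degenerate. -/
theorem stmt2 (N : Type*) [NonUnitalCommRing N] [Module ℂ N] [SMulCommClass ℂ N N]
    [IsScalarTower ℂ N N] [FiniteDimensional ℂ N]
    (ν : ℕ) (hnil : npow N (ν + 1) = ⊥) (hann : Module.finrank ℂ (annN N) = 1)
    (π : Unitization ℂ N →ₗ[ℂ] N)
    (hrange : ∀ u : Unitization ℂ N, π u ∈ annN N)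
    (hid : ∀ u ∈ annN N, π (Unitization.inr u : Unitization ℂ N) = u)
    (hone : π 1 = 0) :
    ∀ u : Unitization ℂ N, (∀ v : Unitization ℂ N, π (u * v) = 0) → u = 0 :=
  stmt2_general N ν hnil hann π hid
end

section
/- Let N be an admissible algebra and π, π̃ two admissible projections N → Ann(N). Then there exists a ∈ N such that S_{π̃} = S_π + a, where S_π := {u ∈ N : π(exp₁(2u)) = 0} and exp₁(v) := Σ_{m≥1} v^m/m!. -/
/-!
Since `N` is nilpotent, `1 + exp₁` is the exponential of the unitization, so
`exp₁ (x + y) = exp₁ x + exp₁ y + exp₁ x * exp₁ y`, and `exp₁` is onto `N` (solve `exp₁ b = c`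
modulo `N², N³, …` in turn). By nilpotency the form `(x, c) ↦ π (x c)` has radical exactly
`Ann(N)`; as `Ann(N)` is a line, counting dimensions gives `c` with `π̃ x - π x = π (x c)` for all
`x`. If `exp₁ b = c - π c`, then `π (exp₁ (w + b)) = π̃ (exp₁ w)` for every `w`, so `a = -b/2`.
-/

open Finset

section Filtration

variable {N : Type*} [NonUnitalCommRing N] [Module ℂ N]

lemma mul_mem_npow_succ_s4 (u : N) {v : N} {j : ℕ} (hv : v ∈ npow N j) : u * v ∈ npow N (j + 1) :=
  match j with
  | 0 => Submodule.mem_top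
  | _ + 1 => Submodule.subset_span ⟨u, v, hv, rfl⟩

lemma npow_succ_le (j : ℕ) : npow N (j + 1) ≤ npow N j := by
  induction j with
  | zero => exact le_top
  | succ j ih =>
    match j with
    | 0 => exact le_top
    | j + 1 =>
      refine Submodule.span_le.mpr ?_
      rintro _ ⟨u, v, hv, rfl⟩
      exact mul_mem_npow_succ_s4 u (ih hv)

lemma npow_antitone : Antitone (npow N) :=
  antitone_nat_of_succ_le npow_succ_le

lemma mul_mem_npow (u : N) {v : N} {j : ℕ} (hv : v ∈ npow N j) : u * v ∈ npow N j :=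
  npow_succ_le j (mul_mem_npow_succ_s4 u hv)

lemma upow_mem_npow {r : N} {j : ℕ} (hr : r ∈ npow N j) : ∀ m, upow r m ∈ npow N j
  | 0 => zero_mem _
  | 1 => hr
  | m + 2 => mul_mem_npow r (upow_mem_npow hr (m + 1))

lemma upow_add_two_mem_npow_succ {r : N} {j : ℕ} (hr : r ∈ npow N j) (m : ℕ) :
    upow r (m + 2) ∈ npow N (j + 1) :=
  mul_mem_npow_succ_s4 r (upow_mem_npow hr (m + 1))

lemma upow_succ_mem_npow_succ (u : N) : ∀ m, upow u (m + 1) ∈ npow N (m + 1)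
  | 0 => Submodule.mem_top
  | m + 1 => mul_mem_npow_succ_s4 u (upow_succ_mem_npow_succ u m)

lemma eq_zero_of_mem_npow {ν m : ℕ} (hnil : npow N (ν + 1) = ⊥) (hm : ν + 1 ≤ m) {x : N}
    (hx : x ∈ npow N m) : x = 0 := by
  simpa [hnil] using npow_antitone hm hx

end Filtration

section Annihilator

variable {N : Type*} [NonUnitalCommRing N] [Module ℂ N] [IsScalarTower ℂ N N] {ν : ℕ}

lemma eq_zero_of_mem_of_forall_mem_annN (hnil : npow N (ν + 1) = ⊥) {s : Set N}
    (hs : ∀ y ∈ s, ∀ x, y * x ∈ s) (hann : ∀ z ∈ s, z ∈ annN N → z = 0) {y : N} (hy : y ∈ s) :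
    y = 0 := by
  suffices h : ∀ d k, k + d = ν + 1 → ∀ y ∈ s, y ∈ npow N k → y = 0 from
    h (ν + 1) 0 (by omega) y hy Submodule.mem_top
  intro d
  induction d with
  | zero => exact fun k hk y _ hyk => eq_zero_of_mem_npow hnil (by omega) hyk
  | succ d ih =>
    intro k hk y hys hyk
    refine hann y hys fun x => ih (k + 1) (by omega) _ (hs y hys x) ?_
    rw [mul_comm]
    exact mul_mem_npow_succ_s4 x hyk

lemma mem_annN_of_forall_map_mul_eq_zero (hnil : npow N (ν + 1) = ⊥) {π : N →ₗ[ℂ] N}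
    (hπid : ∀ u ∈ annN N, π u = u) {y : N} (hy : ∀ x, π (y * x) = 0) : y ∈ annN N := by
  let s : Set N := {w | π w = 0 ∧ ∀ x, π (w * x) = 0}
  have hs : ∀ w ∈ s, ∀ x, w * x ∈ s := fun w hw x =>
    ⟨hw.2 x, fun x' => by rw [mul_assoc]; exact hw.2 _⟩
  have hann : ∀ z ∈ s, z ∈ annN N → z = 0 := fun z hz hzA => (hπid z hzA).symm.trans hz.1
  exact fun x => eq_zero_of_mem_of_forall_mem_annN hnil hs hann
    ⟨hy x, fun x' => by rw [mul_assoc]; exact hy _⟩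

end Annihilator

lemma LinearMap.range_eq_dualAnnihilator_of_ker_eq {K V : Type*} [Field K] [AddCommGroup V]
    [Module K V] [FiniteDimensional K V] {W : Submodule K V} {B : V →ₗ[K] Module.Dual K V}
    (hker : LinearMap.ker B = W) (hrange : LinearMap.range B ≤ W.dualAnnihilator) :
    LinearMap.range B = W.dualAnnihilator := by
  refine Submodule.eq_of_le_of_finrank_eq hrange ?_
  have h₁ := B.finrank_range_add_finrank_ker
  have h₂ := Subspace.finrank_add_finrank_dualAnnihilator_eq W
  rw [hker] at h₁
  omega

section Exponential

variable {N : Type*} [NonUnitalCommRing N] [Module ℂ N] {ν : ℕ}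

/-- The paper's `exp₁`; the series stops at `ν` because `N^(ν+1) = 0`. -/
noncomputable def expSubOne (ν : ℕ) (u : N) : N :=
  ∑ m ∈ Icc 1 ν, ((m.factorial : ℂ))⁻¹ • upow u m

lemma expSubOne_mem_npow {r : N} {j : ℕ} (hr : r ∈ npow N j) : expSubOne ν r ∈ npow N j :=
  sum_mem fun m _ => Submodule.smul_mem _ _ (upow_mem_npow hr m)

lemma expSubOne_sub_self_mem_npow_succ (hν : 1 ≤ ν) {r : N} {j : ℕ} (hr : r ∈ npow N j) :
    expSubOne ν r - r ∈ npow N (j + 1) := by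
  rw [expSubOne, ← Finset.insert_Icc_add_one_left_eq_Icc hν, sum_insert (by simp)]
  simp only [Nat.factorial_one, Nat.cast_one, inv_one, one_smul, upow, add_sub_cancel_left]
  refine sum_mem fun m hm => Submodule.smul_mem _ _ ?_
  obtain ⟨m, rfl⟩ : ∃ k, m = k + 2 := ⟨m - 2, by simp at hm; omega⟩
  exact upow_add_two_mem_npow_succ hr m

variable [SMulCommClass ℂ N N] [IsScalarTower ℂ N N]

lemma inr_upow_succ (u : N) (m : ℕ) :
    ((upow u (m + 1) : N) : Unitization ℂ N) = (u : Unitization ℂ N) ^ (m + 1) := by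
  induction m with
  | zero => simp [upow]
  | succ m ih =>
    change ((u * upow u (m + 1) : N) : Unitization ℂ N) = _
    rw [Unitization.inr_mul, ih, ← pow_succ']

lemma inr_pow_eq_zero (hnil : npow N (ν + 1) = ⊥) (u : N) :
    (u : Unitization ℂ N) ^ (ν + 1) = 0 := by
  rw [← inr_upow_succ, eq_zero_of_mem_npow hnil le_rfl (upow_succ_mem_npow_succ u ν),
    Unitization.inr_zero]

lemma inr_expSubOne [Module ℚ (Unitization ℂ N)] (hnil : npow N (ν + 1) = ⊥) (u : N) :
    ((expSubOne ν u : N) : Unitization ℂ N) = IsNilpotent.exp (u : Unitization ℂ N) - 1 := by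
  rw [IsNilpotent.exp_eq_sum (inr_pow_eq_zero hnil u), sum_range_succ', expSubOne,
    ← Finset.Ico_add_one_right_eq_Icc, sum_Ico_eq_sum_range]
  simp only [Nat.factorial_zero, Nat.cast_one, inv_one, pow_zero, one_smul, add_sub_cancel_right]
  rw [← Unitization.inrHom_apply ℂ ℂ, map_sum]
  refine sum_congr rfl fun m _ => ?_
  rw [add_comm 1 m, map_smul, Unitization.inrHom_apply, inr_upow_succ, ← Rat.cast_smul_eq_qsmul ℂ]
  push_cast
  rfl

lemma expSubOne_add (hnil : npow N (ν + 1) = ⊥) (x y : N) :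
    expSubOne ν (x + y) = expSubOne ν x + expSubOne ν y + expSubOne ν x * expSubOne ν y := by
  let _ : Module ℚ (Unitization ℂ N) := Module.compHom _ (algebraMap ℚ ℂ)
  have hnilp (u : N) : IsNilpotent (u : Unitization ℂ N) := ⟨ν + 1, inr_pow_eq_zero hnil u⟩
  apply Unitization.inr_injective (R := ℂ)
  simp only [Unitization.inr_add, Unitization.inr_mul, inr_expSubOne hnil]
  rw [IsNilpotent.exp_add_of_commute (Commute.all _ _) (hnilp x) (hnilp y)]
  ring

lemma expSubOne_surjective (hnil : npow N (ν + 1) = ⊥) :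
    Function.Surjective (expSubOne ν : N → N) := by
  intro c
  rcases Nat.eq_zero_or_pos ν with rfl | hν
  · refine ⟨0, ?_⟩
    rw [eq_zero_of_mem_npow hnil le_rfl (Submodule.mem_top : c ∈ npow N 1)]
    simp [expSubOne]
  have approx : ∀ k, ∃ b, c - expSubOne ν b ∈ npow N (k + 1) := by
    intro k
    induction k with
    | zero => exact ⟨0, Submodule.mem_top⟩
    | succ k ih =>
      obtain ⟨b, hb⟩ := ih
      set r := c - expSubOne ν b
      refine ⟨b + r, ?_⟩
      have hc : c = expSubOne ν b + r := (add_sub_cancel _ _).symm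
      have : c - expSubOne ν (b + r) =
          -(expSubOne ν r - r) - expSubOne ν b * expSubOne ν r := by
        rw [expSubOne_add hnil, hc]
        abel
      rw [this]
      exact sub_mem (neg_mem (expSubOne_sub_self_mem_npow_succ hν hb))
        (mul_mem_npow_succ_s4 _ (expSubOne_mem_npow hb))
  obtain ⟨b, hb⟩ := approx ν
  exact ⟨b, (sub_eq_zero.mp (eq_zero_of_mem_npow hnil le_rfl hb)).symm⟩

end Exponential

lemma exists_forall_sub_eq_map_mul {N : Type*} [NonUnitalCommRing N] [Module ℂ N]
    [SMulCommClass ℂ N N] [IsScalarTower ℂ N N] [FiniteDimensional ℂ N] {ν : ℕ}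
    (hnil : npow N (ν + 1) = ⊥) (hann : Module.finrank ℂ (annN N) = 1) {π πt : N →ₗ[ℂ] N}
    (hπr : ∀ u : N, π u ∈ annN N) (hπid : ∀ u ∈ annN N, π u = u)
    (hπtr : ∀ u : N, πt u ∈ annN N) (hπtid : ∀ u ∈ annN N, πt u = u) :
    ∃ c : N, ∀ x : N, πt x - π x = π (x * c) := by
  let e : annN N ≃ₗ[ℂ] ℂ := LinearEquiv.ofFinrankEq _ _ (by rw [hann, Module.finrank_self])
  let p := π.codRestrict (annN N) hπr
  let pt := πt.codRestrict (annN N) hπtr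
  let B : N →ₗ[ℂ] Module.Dual ℂ N := (LinearMap.mul ℂ N).flip.compr₂ (e.toLinearMap ∘ₗ p)
  have hB (c x : N) : B c x = e (p (x * c)) := rfl
  have hker : LinearMap.ker B = annN N := by
    ext c
    refine ⟨fun hc => ?_, fun hc => LinearMap.ext fun x => ?_⟩
    · refine mem_annN_of_forall_map_mul_eq_zero hnil hπid fun x => ?_
      have : e (p (x * c)) = 0 := LinearMap.congr_fun hc x
      rw [mul_comm]
      simpa [p, Subtype.ext_iff] using this
    · rw [hB, mul_comm, show c * x = 0 from hc x, map_zero, map_zero, LinearMap.zero_apply]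
  have hrange : LinearMap.range B ≤ (annN N).dualAnnihilator := by
    rintro _ ⟨c, rfl⟩
    exact (Submodule.mem_dualAnnihilator _).mpr fun x hx => by rw [hB, hx c, map_zero, map_zero]
  have hψ : e.toLinearMap ∘ₗ (pt - p) ∈ (annN N).dualAnnihilator := by
    refine (Submodule.mem_dualAnnihilator _).mpr fun x hx => ?_
    have : pt x - p x = 0 := Subtype.ext (by simp [p, pt, hπid x hx, hπtid x hx])
    simp [this]
  obtain ⟨c, hc⟩ := LinearMap.range_eq_dualAnnihilator_of_ker_eq hker hrange ▸ hψ
  refine ⟨c, fun x => ?_⟩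
  have := e.injective ((hB c x).symm.trans (LinearMap.congr_fun hc x))
  exact (congrArg Subtype.val this).symm

/-- For an admissible algebra `N` with two admissible projections `π`, `π̃`,
there is `a ∈ N` with `S_{π̃} = S_π + a`, where `S_π = {u : π(exp₁(2u)) = 0}` and
`exp₁(v) = Σ_{m≥1} v^m/m!`. -/
theorem stmt4 (N : Type*) [NonUnitalCommRing N] [Module ℂ N] [SMulCommClass ℂ N N]
    [IsScalarTower ℂ N N] [FiniteDimensional ℂ N]
    (ν : ℕ) (hnil : npow N (ν + 1) = ⊥) (hann : Module.finrank ℂ (annN N) = 1)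
    (π πt : N →ₗ[ℂ] N)
    (hπr : ∀ u : N, π u ∈ annN N) (hπid : ∀ u ∈ annN N, π u = u)
    (hπtr : ∀ u : N, πt u ∈ annN N) (hπtid : ∀ u ∈ annN N, πt u = u) :
    ∃ a : N,
      {u : N | πt (∑ m ∈ Finset.Icc 1 ν, ((Nat.factorial m : ℂ))⁻¹ • upow ((2 : ℂ) • u) m) = 0}
        = (fun u : N => u + a) ''
          {u : N | π (∑ m ∈ Finset.Icc 1 ν, ((Nat.factorial m : ℂ))⁻¹ • upow ((2 : ℂ) • u) m) = 0} := by
  obtain ⟨c, hc⟩ := exists_forall_sub_eq_map_mul hnil hann hπr hπid hπtr hπtid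
  obtain ⟨b, hb⟩ := expSubOne_surjective hnil (c - π c)
  have shift (w : N) : π (expSubOne ν (w + b)) = πt (expSubOne ν w) := by
    have hπc : expSubOne ν w * π c = 0 := by rw [mul_comm]; exact hπr c _
    rw [expSubOne_add hnil, hb, mul_sub, hπc, sub_zero, map_add, map_add, map_sub,
      hπid _ (hπr c), ← hc]
    abel
  refine ⟨-((2 : ℂ)⁻¹ • b), ?_⟩
  rw [Set.image_add_right, neg_neg]
  ext u
  change πt (expSubOne ν _) = 0 ↔ π (expSubOne ν _) = 0
  rw [smul_add, smul_smul, mul_inv_cancel₀ two_ne_zero, one_smul, shift]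
end

section
/- Let N be an admissible algebra with a grading N = ⊕_{j>0} N_j with N_j·N_m ⊆ N_{j+m}, and let d = max{j : N_j ≠ 0}. Then Ann(N) = N_d. -/
theorem top_grade_le_annN {N : Type*} [NonUnitalCommRing N] [Module ℂ N] [IsScalarTower ℂ N N]
    {G : ℕ → Submodule ℂ N} {d : ℕ} (hG0 : G 0 = ⊥) (hGtop : ∀ j : ℕ, d < j → G j = ⊥)
    (hGmul : ∀ (j m : ℕ) (u v : N), u ∈ G j → v ∈ G m → u * v ∈ G (j + m))
    (hGspan : ⨆ j, G j = ⊤) :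
    G d ≤ annN N := by
  intro u hu v
  have hv : v ∈ ⨆ j, G j := hGspan ▸ Submodule.mem_top
  induction hv using Submodule.iSup_induction' with
  | mem j w hw =>
    rcases Nat.eq_zero_or_pos j with rfl | hj
    · rw [hG0, Submodule.mem_bot] at hw
      rw [hw, mul_zero]
    · have huw := hGmul d j u w hu hw
      rwa [hGtop (d + j) (by omega), Submodule.mem_bot] at huw
  | zero => exact mul_zero u
  | add x _ y _ hx hy => rw [mul_add, hx, hy, add_zero]

theorem stmt6_general (N : Type*) [NonUnitalCommRing N] [Module ℂ N]
    [IsScalarTower ℂ N N]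
    (hann : Module.finrank ℂ (annN N) = 1)
    (G : ℕ → Submodule ℂ N) (d : ℕ)
    (hG0 : G 0 = ⊥) (hGd : G d ≠ ⊥) (hGtop : ∀ j : ℕ, d < j → G j = ⊥)
    (hGmul : ∀ (j m : ℕ) (u v : N), u ∈ G j → v ∈ G m → u * v ∈ G (j + m))
    (hdirect : DirectSum.IsInternal G) :
    annN N = G d := by
  have hle : G d ≤ annN N :=
    top_grade_le_annN hG0 hGtop hGmul hdirect.submodule_iSup_eq_top
  exact ((Submodule.isAtom_iff_finrank_eq_one.mpr hann).le_iff_eq hGd |>.mp hle).symm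

/-- If an admissible algebra `N` carries a grading `N = ⊕_{j>0} N_j` with
`N_j·N_m ⊆ N_{j+m}` and `d = max{j : N_j ≠ 0}`, then `Ann(N) = N_d`. -/
theorem stmt6 (N : Type*) [NonUnitalCommRing N] [Module ℂ N] [SMulCommClass ℂ N N]
    [IsScalarTower ℂ N N] [FiniteDimensional ℂ N]
    (ν : ℕ) (hnil : npow N (ν + 1) = ⊥) (hann : Module.finrank ℂ (annN N) = 1)
    (G : ℕ → Submodule ℂ N) (d : ℕ)
    (hG0 : G 0 = ⊥) (hGd : G d ≠ ⊥) (hGtop : ∀ j : ℕ, d < j → G j = ⊥)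
    (hGmul : ∀ (j m : ℕ) (u v : N), u ∈ G j → v ∈ G m → u * v ∈ G (j + m))
    (hdirect : DirectSum.IsInternal G) :
    annN N = G d :=
  stmt6_general N hann G d hG0 hGd hGtop hGmul hdirect
end

section
/- Let N = ⊕_{j=1}^d N_j be a graded admissible algebra with Ann(N) = N_d, π the projection onto N_d with kernel K = ⊕_{j<d} N_j, and f := π ∘ exp₁ : N → N_d where exp₁(u) = Σ_{m≥1} u^m/m!. For 1 ≤ j < d and α ∈ N_j, define the vector field ξ_α(u) := (d − j − Σ_{m=1}^{d−j} m·u_m)·α on N, where u = u_1 + ⋯ + u_d with u_m ∈ N_m. Then the Lie derivative of f along ξ_α vanishes identically: (Df)(u)(ξ_α(u)) = 0 for all u ∈ N. -/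
open Finset

/-! The derivative of `f = π ∘ exp₁` at `u` is `v ↦ π (v + exp₁(u) v)`, since `u^d` annihilates `N`.
The Euler operator `E = ∑ m π_m` is a derivation, so `E (exp₁ u) = (1 + exp₁ u) E u`, while
`ξ_α(u) = ((d - j) - E u) α`. Hence `Df(u) ξ_α(u) = π_{d-j}((d - j)(1 + exp₁ u) - E (exp₁ u)) α`,
which vanishes because `E` acts on the component of degree `d - j` as multiplication by `d - j`. -/

theorem upow_add_two {N : Type*} [NonUnitalCommRing N] (u : N) (m : ℕ) :
    upow u (m + 2) = u * upow u (m + 1) :=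
  rfl

theorem inv_factorial_add_two_mul {𝕜 : Type*} [Field 𝕜] [CharZero 𝕜] (n : ℕ) :
    ((Nat.factorial (n + 2) : 𝕜))⁻¹ * ((n : 𝕜) + 2) = ((Nat.factorial (n + 1) : 𝕜))⁻¹ := by
  have h : ((n : 𝕜) + 2) = ((n + 2 : ℕ) : 𝕜) := by push_cast; ring
  rw [h, Nat.factorial_succ (n + 1), Nat.cast_mul, mul_inv_rev, mul_assoc,
    inv_mul_cancel₀ (Nat.cast_ne_zero.2 (Nat.succ_ne_zero _)), mul_one]

section Projections

variable {R M ι : Type*} [Ring R] [AddCommGroup M] [Module R M] [DecidableEq ι]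
  {G : ι → Submodule R M} {p : ι → M →ₗ[R] M} {s : Finset ι}

theorem iSupIndep.eq_zero_of_mem_of_notMem (hG : iSupIndep G) (hp : ∀ i x, p i x ∈ G i)
    (hps : ∀ x, ∑ i ∈ s, p i x = x) {i : ι} (hi : i ∉ s) {x : M} (hx : x ∈ G i) : x = 0 := by
  have hsum : ∑ l ∈ insert i s, (if l = i then x else -p l x) = 0 := by
    rw [sum_insert hi, if_pos rfl, sum_congr rfl fun l hl => if_neg (ne_of_mem_of_not_mem hl hi),
      sum_neg_distrib, hps, add_neg_cancel]
  have := (iSupIndep_iff_finsetSum_eq_zero_imp_eq_zero G).1 hG (insert i s) _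
    (fun l _ => by split_ifs with h; exacts [h ▸ hx, neg_mem (hp l x)]) hsum i (mem_insert_self i s)
  simpa using this

theorem iSupIndep.proj_apply_of_mem (hG : iSupIndep G) (hp : ∀ i x, p i x ∈ G i)
    (hps : ∀ x, ∑ i ∈ s, p i x = x) {i : ι} {x : M} (hx : x ∈ G i) (k : ι) :
    p k x = if k = i then x else 0 := by
  by_cases hi : i ∈ s
  · by_cases hk : k ∈ s
    · refine (iSupIndep_iff_finsetSum_eq_imp_eq G).1 hG s (fun l => p l x)
        (fun l => if l = i then x else 0) (fun l _ => ⟨hp l x, ?_⟩) (by simp [hps, hi]) k hk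
      split_ifs with h
      exacts [h ▸ hx, zero_mem _]
    · rw [hG.eq_zero_of_mem_of_notMem hp hps hk (hp k x), if_neg (by rintro rfl; exact hk hi)]
  · rw [hG.eq_zero_of_mem_of_notMem hp hps hi hx, map_zero, ite_self]

end Projections

section GradedAlgebra

variable {R N : Type*} [CommRing R] [NonUnitalCommRing N] [Module R N]
  {G : ℕ → Submodule R N} {p : ℕ → N →ₗ[R] N} {d : ℕ}

theorem proj_mul_of_mem (hG : iSupIndep G) (hp : ∀ i x, p i x ∈ G i)
    (hps : ∀ x, ∑ i ∈ Icc 1 d, p i x = x)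
    (hmul : ∀ (j m : ℕ) (u v : N), u ∈ G j → v ∈ G m → u * v ∈ G (j + m))
    {j : ℕ} {α : N} (hα : α ∈ G j) (k : ℕ) (x : N) : p (k + j) (x * α) = p k x * α := by
  conv_lhs => rw [← hps x, sum_mul, map_sum]
  simp only [hG.proj_apply_of_mem hp hps (hmul _ _ _ _ (hp _ x) hα), add_left_inj, sum_ite_eq]
  split_ifs with hk
  · rfl
  · rw [hG.eq_zero_of_mem_of_notMem hp hps hk (hp k x), zero_mul]

variable (p d) in
def euler : N →ₗ[R] N := ∑ m ∈ Icc 1 d, (m : R) • p m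

theorem euler_apply (x : N) : euler p d x = ∑ m ∈ Icc 1 d, (m : R) • p m x := by
  simp [euler, LinearMap.sum_apply]

theorem euler_apply_of_mem (hG : iSupIndep G) (hp : ∀ i x, p i x ∈ G i)
    (hps : ∀ x, ∑ i ∈ Icc 1 d, p i x = x) {i : ℕ} {x : N} (hx : x ∈ G i) :
    euler p d x = (i : R) • x := by
  simp only [euler_apply, hG.proj_apply_of_mem hp hps hx, smul_ite, smul_zero, sum_ite_eq']
  split_ifs with hi
  · rfl
  · rw [hG.eq_zero_of_mem_of_notMem hp hps hi hx, smul_zero]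

theorem proj_euler (hG : iSupIndep G) (hp : ∀ i x, p i x ∈ G i)
    (hps : ∀ x, ∑ i ∈ Icc 1 d, p i x = x) (k : ℕ) (x : N) :
    p k (euler p d x) = (k : R) • p k x := by
  simp only [euler_apply, map_sum, map_smul, hG.proj_apply_of_mem hp hps (hp _ x), smul_ite,
    smul_zero, sum_ite_eq]
  split_ifs with hk
  · rfl
  · rw [hG.eq_zero_of_mem_of_notMem hp hps hk (hp k x), smul_zero]

theorem euler_mul [IsScalarTower R N N] [SMulCommClass R N N] (hG : iSupIndep G)
    (hp : ∀ i x, p i x ∈ G i) (hps : ∀ x, ∑ i ∈ Icc 1 d, p i x = x)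
    (hmul : ∀ (j m : ℕ) (u v : N), u ∈ G j → v ∈ G m → u * v ∈ G (j + m)) (x y : N) :
    euler p d (x * y) = euler p d x * y + x * euler p d y := by
  have homogeneous : ∀ a b, euler p d (p a x * p b y) =
      euler p d (p a x) * p b y + p a x * euler p d (p b y) := fun a b => by
    simp only [euler_apply_of_mem hG hp hps (hmul _ _ _ _ (hp a x) (hp b y)),
      euler_apply_of_mem hG hp hps (hp a x), euler_apply_of_mem hG hp hps (hp b y),
      smul_mul_assoc, mul_smul_comm, Nat.cast_add, add_smul]
  rw [← hps x, ← hps y]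
  simp only [sum_mul, mul_sum, map_sum, homogeneous, sum_add_distrib]

theorem euler_mul_eq_sum_Icc_of_mem [IsScalarTower R N N] (hG : iSupIndep G)
    (hp : ∀ i x, p i x ∈ G i) (hps : ∀ x, ∑ i ∈ Icc 1 d, p i x = x)
    (hmul : ∀ (j m : ℕ) (u v : N), u ∈ G j → v ∈ G m → u * v ∈ G (j + m))
    {j k : ℕ} (hkj : k + j = d) {α : N} (hα : α ∈ G j) (u : N) :
    euler p d u * α = ∑ m ∈ Icc 1 k, (m : R) • (p m u * α) := by
  simp only [euler_apply, sum_mul, smul_mul_assoc]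
  refine (sum_subset (Icc_subset_Icc_right (show k ≤ d by omega)) fun m hm hmk => ?_).symm
  rw [hG.eq_zero_of_mem_of_notMem hp hps (by simp at hm hmk ⊢; omega)
    (hmul _ _ _ _ (hp m u) hα), smul_zero]

variable (G) in
def gradedAtLeast (k : ℕ) : Submodule R N := ⨆ i, G (i + k)

theorem mul_mem_gradedAtLeast
    (hmul : ∀ (j m : ℕ) (u v : N), u ∈ G j → v ∈ G m → u * v ∈ G (j + m))
    {a b : ℕ} {x y : N} (hx : x ∈ gradedAtLeast G a) (hy : y ∈ gradedAtLeast G b) :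
    x * y ∈ gradedAtLeast G (a + b) := by
  induction hx using Submodule.iSup_induction' with
  | mem i x hx =>
    induction hy using Submodule.iSup_induction' with
    | mem l y hy =>
      refine Submodule.mem_iSup_of_mem (i + l) ?_
      rw [show i + l + (a + b) = i + a + (l + b) by omega]
      exact hmul _ _ _ _ hx hy
    | zero => rw [mul_zero]; exact zero_mem _
    | add y₁ y₂ _ _ h₁ h₂ => rw [mul_add]; exact add_mem h₁ h₂
  | zero => rw [zero_mul]; exact zero_mem _
  | add x₁ x₂ _ _ h₁ h₂ => rw [add_mul]; exact add_mem h₁ h₂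

theorem mem_gradedAtLeast_one (hp : ∀ i x, p i x ∈ G i) (hps : ∀ x, ∑ i ∈ Icc 1 d, p i x = x)
    (x : N) : x ∈ gradedAtLeast G 1 := by
  rw [← hps x]
  refine sum_mem fun l hl => Submodule.mem_iSup_of_mem (l - 1) ?_
  rw [Nat.sub_add_cancel (mem_Icc.1 hl).1]
  exact hp l x

theorem upow_mem_gradedAtLeast (hp : ∀ i x, p i x ∈ G i) (hps : ∀ x, ∑ i ∈ Icc 1 d, p i x = x)
    (hmul : ∀ (j m : ℕ) (u v : N), u ∈ G j → v ∈ G m → u * v ∈ G (j + m)) (u : N) (m : ℕ) :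
    upow u (m + 1) ∈ gradedAtLeast G (m + 1) := by
  induction m with
  | zero => exact mem_gradedAtLeast_one hp hps u
  | succ m ih =>
    have := mul_mem_gradedAtLeast hmul (mem_gradedAtLeast_one hp hps u) ih
    rwa [add_comm 1] at this

theorem gradedAtLeast_eq_bot (hG : iSupIndep G) (hp : ∀ i x, p i x ∈ G i)
    (hps : ∀ x, ∑ i ∈ Icc 1 d, p i x = x) {k : ℕ} (hk : d < k) : gradedAtLeast G k = ⊥ :=
  iSup_eq_bot.2 fun i => (Submodule.eq_bot_iff _).2 fun _ hx =>
    hG.eq_zero_of_mem_of_notMem hp hps (by simp; omega) hx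

theorem upow_mul_eq_zero (hG : iSupIndep G) (hp : ∀ i x, p i x ∈ G i)
    (hps : ∀ x, ∑ i ∈ Icc 1 d, p i x = x)
    (hmul : ∀ (j m : ℕ) (u v : N), u ∈ G j → v ∈ G m → u * v ∈ G (j + m)) (u v : N) :
    upow u d * v = 0 := by
  cases d with
  | zero => exact zero_mul v
  | succ n =>
    have := mul_mem_gradedAtLeast hmul (upow_mem_gradedAtLeast hp hps hmul u n)
      (mem_gradedAtLeast_one hp hps v)
    rwa [gradedAtLeast_eq_bot hG hp hps (Nat.lt_succ_self _), Submodule.mem_bot] at this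

end GradedAlgebra

section Exponential

variable {𝕜 N : Type*} [Field 𝕜] [NonUnitalCommRing N] [Module 𝕜 N]

variable (𝕜) in
def expOne (n : ℕ) (u : N) : N := ∑ m ∈ Icc 1 n, ((Nat.factorial m : 𝕜))⁻¹ • upow u m

theorem expOne_zero (u : N) : expOne 𝕜 0 u = 0 := by simp [expOne]

theorem expOne_succ (n : ℕ) (u : N) :
    expOne 𝕜 (n + 1) u = expOne 𝕜 n u + ((Nat.factorial (n + 1) : 𝕜))⁻¹ • upow u (n + 1) :=
  sum_Icc_succ_top (Nat.le_add_left 1 n) _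

theorem expOne_one (u : N) : expOne 𝕜 1 u = u := by
  rw [expOne_succ, expOne_zero, zero_add, Nat.factorial_one, Nat.cast_one, inv_one, one_smul]
  rfl

variable [IsScalarTower 𝕜 N N] [SMulCommClass 𝕜 N N] {G : ℕ → Submodule 𝕜 N}
  {p : ℕ → N →ₗ[𝕜] N} {d : ℕ}

theorem euler_upow_add_two (hG : iSupIndep G) (hp : ∀ i x, p i x ∈ G i)
    (hps : ∀ x, ∑ i ∈ Icc 1 d, p i x = x)
    (hmul : ∀ (j m : ℕ) (u v : N), u ∈ G j → v ∈ G m → u * v ∈ G (j + m)) (u : N) (m : ℕ) :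
    euler p d (upow u (m + 2)) = ((m : 𝕜) + 2) • (upow u (m + 1) * euler p d u) := by
  induction m with
  | zero =>
    rw [upow_add_two, euler_mul hG hp hps hmul, mul_comm (euler p d u)]
    simp only [upow, Nat.cast_zero, zero_add, two_smul]
  | succ m ih =>
    rw [upow_add_two, euler_mul hG hp hps hmul, ih, mul_smul_comm, ← mul_assoc, ← upow_add_two,
      mul_comm (euler p d u)]
    push_cast
    module

theorem euler_expOne_succ [CharZero 𝕜] (hG : iSupIndep G) (hp : ∀ i x, p i x ∈ G i)
    (hps : ∀ x, ∑ i ∈ Icc 1 d, p i x = x)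
    (hmul : ∀ (j m : ℕ) (u v : N), u ∈ G j → v ∈ G m → u * v ∈ G (j + m)) (u : N) (n : ℕ) :
    euler p d (expOne 𝕜 (n + 1) u) = euler p d u + expOne 𝕜 n u * euler p d u := by
  induction n with
  | zero => rw [expOne_one, expOne_zero, zero_mul, add_zero]
  | succ n ih =>
    rw [expOne_succ (n + 1), map_add, ih, map_smul, euler_upow_add_two hG hp hps hmul, smul_smul,
      inv_factorial_add_two_mul, expOne_succ n, add_mul, smul_mul_assoc, add_assoc]

theorem proj_add_expOne_mul_eq_zero [CharZero 𝕜] (hG : iSupIndep G) (hp : ∀ i x, p i x ∈ G i)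
    {n : ℕ} (hps : ∀ x, ∑ i ∈ Icc 1 (n + 1), p i x = x)
    (hmul : ∀ (j m : ℕ) (u v : N), u ∈ G j → v ∈ G m → u * v ∈ G (j + m))
    {j k : ℕ} (hkj : k + j = n + 1) {α : N} (hα : α ∈ G j) (u : N) :
    p (n + 1) ((k : 𝕜) • α - euler p (n + 1) u * α
      + expOne 𝕜 n u * ((k : 𝕜) • α - euler p (n + 1) u * α)) = 0 := by
  have proj_mul : ∀ x, p (n + 1) (x * α) = p k x * α := fun x => by
    rw [← proj_mul_of_mem hG hp hps hmul hα k x, hkj]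
  have hα_zero : (k : 𝕜) • p (n + 1) α = 0 := by
    rw [hG.proj_apply_of_mem hp hps hα]
    rcases k with _ | k
    · rw [Nat.cast_zero, zero_smul]
    · rw [if_neg (by omega), smul_zero]
  have hexp_mul : expOne 𝕜 (n + 1) u * α = expOne 𝕜 n u * α := by
    rw [expOne_succ, add_mul, smul_mul_assoc, upow_mul_eq_zero hG hp hps hmul, smul_zero, add_zero]
  have hsplit : (k : 𝕜) • α - euler p (n + 1) u * α
      + expOne 𝕜 n u * ((k : 𝕜) • α - euler p (n + 1) u * α)
      = (k : 𝕜) • α + (k : 𝕜) • (expOne 𝕜 n u * α) - euler p (n + 1) (expOne 𝕜 (n + 1) u) * α := by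
    rw [euler_expOne_succ hG hp hps hmul]
    simp only [mul_sub, mul_smul_comm, add_mul, mul_assoc]
    abel
  rw [hsplit, map_sub, map_add, map_smul, map_smul, hα_zero, proj_mul (euler p (n + 1) _),
    proj_euler hG hp hps, smul_mul_assoc, ← proj_mul, hexp_mul, zero_add, sub_self]

end Exponential

section Derivative

variable {𝕜 N : Type*} [NontriviallyNormedField 𝕜] [NonUnitalNormedCommRing N] [NormedSpace 𝕜 N]
  [IsScalarTower 𝕜 N N] [SMulCommClass 𝕜 N N]

theorem hasFDerivAt_upow_add_two (u : N) (m : ℕ) :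
    HasFDerivAt (fun y => upow y (m + 2))
      (((m : 𝕜) + 2) • ContinuousLinearMap.mul 𝕜 N (upow u (m + 1))) u := by
  induction m with
  | zero =>
    refine ((ContinuousLinearMap.mul 𝕜 N).hasFDerivAt_of_bilinear (hasFDerivAt_id u)
      (hasFDerivAt_id u)).congr_fderiv ?_
    ext v
    simp [upow, mul_comm v u, two_smul]
  | succ m ih =>
    refine ((ContinuousLinearMap.mul 𝕜 N).hasFDerivAt_of_bilinear (hasFDerivAt_id u)
      ih).congr_fderiv ?_
    ext v
    simp only [id_eq, ContinuousLinearMap.precompR_apply, map_smul, ContinuousLinearMap.compL_apply,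
      add_apply, smul_apply, ContinuousLinearMap.comp_apply, ContinuousLinearMap.mul_apply',
      ContinuousLinearMap.precompL_apply, ContinuousLinearMap.id_apply, Nat.cast_add, Nat.cast_one]
    rw [← mul_assoc, ← upow_add_two, mul_comm v]
    module

theorem hasFDerivAt_expOne_succ [CharZero 𝕜] (u : N) (n : ℕ) :
    HasFDerivAt (expOne 𝕜 (n + 1))
      (ContinuousLinearMap.id 𝕜 N + ContinuousLinearMap.mul 𝕜 N (expOne 𝕜 n u)) u := by
  induction n with
  | zero =>
    rw [expOne_zero, map_zero, add_zero, funext (expOne_one (𝕜 := 𝕜))]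
    exact hasFDerivAt_id u
  | succ n ih =>
    have h := ih.add ((hasFDerivAt_upow_add_two u n).const_smul
      ((Nat.factorial (n + 2) : 𝕜))⁻¹)
    have hfun : expOne 𝕜 (n + 2) =
        expOne 𝕜 (n + 1) + ((Nat.factorial (n + 2) : 𝕜))⁻¹ • fun y : N => upow y (n + 2) :=
      funext fun y => by rw [expOne_succ (n + 1) y]; rfl
    rw [hfun]
    refine h.congr_fderiv ?_
    rw [expOne_succ n, map_add, map_smul, smul_smul, inv_factorial_add_two_mul, add_assoc]

end Derivative

theorem stmt7_general (N : Type*) [NonUnitalNormedCommRing N] [NormedSpace ℂ N]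
    [SMulCommClass ℂ N N] [IsScalarTower ℂ N N] [FiniteDimensional ℂ N]
    (G : ℕ → Submodule ℂ N) (d : ℕ)
    (hGmul : ∀ (j m : ℕ) (u v : N), u ∈ G j → v ∈ G m → u * v ∈ G (j + m))
    (hdirect : DirectSum.IsInternal G)
    -- the component projections `u ↦ u_j` of the grading:
    (p : ℕ → (N →ₗ[ℂ] N)) (hp : ∀ (j : ℕ) (u : N), p j u ∈ G j)
    (hpsum : ∀ u : N, ∑ j ∈ Finset.Icc 1 d, p j u = u)
    -- `f = π ∘ exp₁` where `π = p d`: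
    (f : N → N)
    (hf : ∀ u : N, f u = p d (∑ m ∈ Finset.Icc 1 d, ((Nat.factorial m : ℂ))⁻¹ • upow u m))
    (j : ℕ) (hjd : j < d) (α : N) (hα : α ∈ G j)
    -- the vector field ξ_α:
    (ξ : N → N)
    (hξ : ∀ u : N, ξ u = ((d : ℂ) - (j : ℂ)) • α
        - ∑ m ∈ Finset.Icc 1 (d - j), (m : ℂ) • (p m u * α)) :
    ∀ u : N, fderiv ℂ f u (ξ u) = 0 := by
  intro u
  obtain ⟨n, rfl⟩ : ∃ n, d = n + 1 := ⟨d - 1, by omega⟩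
  obtain ⟨k, hkj⟩ : ∃ k, k + j = n + 1 := ⟨n + 1 - j, by omega⟩
  have hG := hdirect.submodule_iSupIndep
  have hfderiv : HasFDerivAt f ((p (n + 1)).toContinuousLinearMap ∘L
      (ContinuousLinearMap.id ℂ N + ContinuousLinearMap.mul ℂ N (expOne ℂ n u))) u := by
    rw [show f = fun y => p (n + 1) (expOne ℂ (n + 1) y) from funext hf]
    exact (p (n + 1)).toContinuousLinearMap.hasFDerivAt.comp u (hasFDerivAt_expOne_succ u n)
  have hξu : ξ u = (k : ℂ) • α - euler p (n + 1) u * α := by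
    have hc : ((n + 1 : ℕ) : ℂ) - j = k := by rw [← hkj, Nat.cast_add, add_sub_cancel_right]
    rw [hξ, hc, euler_mul_eq_sum_Icc_of_mem hG hp hpsum hGmul hkj hα, show n + 1 - j = k by omega]
  rw [hfderiv.fderiv, hξu]
  exact proj_add_expOne_mul_eq_zero hG hp hpsum hGmul hkj hα u

/-- For a graded admissible algebra `N = ⊕_{j=1}^d N_j` with
`Ann(N) = N_d`, `π` the projection onto `N_d` with kernel `⊕_{j<d} N_j`, and
`f = π ∘ exp₁`, the vector fields `ξ_α(u) = (d − j − Σ_{m=1}^{d−j} m u_m)·α`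
(for `α ∈ N_j`, `1 ≤ j < d`) annihilate `f`: `(Df)(u)(ξ_α(u)) = 0` for all `u`. -/
theorem stmt7 (N : Type*) [NonUnitalNormedCommRing N] [NormedSpace ℂ N]
    [SMulCommClass ℂ N N] [IsScalarTower ℂ N N] [FiniteDimensional ℂ N]
    (ν : ℕ) (hnil : npow N (ν + 1) = ⊥) (hann : Module.finrank ℂ (annN N) = 1)
    (G : ℕ → Submodule ℂ N) (d : ℕ)
    (hG0 : G 0 = ⊥) (hGd : G d = annN N) (hGtop : ∀ j : ℕ, d < j → G j = ⊥)
    (hGmul : ∀ (j m : ℕ) (u v : N), u ∈ G j → v ∈ G m → u * v ∈ G (j + m))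
    (hdirect : DirectSum.IsInternal G)
    -- the component projections `u ↦ u_j` of the grading:
    (p : ℕ → (N →ₗ[ℂ] N)) (hp : ∀ (j : ℕ) (u : N), p j u ∈ G j)
    (hpsum : ∀ u : N, ∑ j ∈ Finset.Icc 1 d, p j u = u)
    -- `f = π ∘ exp₁` where `π = p d`:
    (f : N → N)
    (hf : ∀ u : N, f u = p d (∑ m ∈ Finset.Icc 1 d, ((Nat.factorial m : ℂ))⁻¹ • upow u m))
    (j : ℕ) (hj : 1 ≤ j) (hjd : j < d) (α : N) (hα : α ∈ G j)
    -- the vector field ξ_α: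
    (ξ : N → N)
    (hξ : ∀ u : N, ξ u = ((d : ℂ) - (j : ℂ)) • α
        - ∑ m ∈ Finset.Icc 1 (d - j), (m : ℂ) • (p m u * α)) :
    ∀ u : N, fderiv ℂ f u (ξ u) = 0 :=
  stmt7_general N G d hGmul hdirect p hp hpsum f hf j hjd α hα ξ hξ
end

section
/- Let N be an admissible algebra, ω : N → ℂ a linear form with ω(Ann(N)) = ℂ, φ : W → ker ω a linear isomorphism, and P = ω ∘ exp₂ ∘ φ the associated nil-polynomial, where exp₂(u) = Σ_{m≥2} u^m/m!. Write P = Σ_{ℓ=2}^ν P^{[ℓ]} with P^{[ℓ]}(x) = ω(φ(x)^ℓ/ℓ!). Then the quadratic form P^{[2]} is non-degenerate on W. -/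
/-
Let `u = φ x ≠ 0`. Since `N` is nilpotent, multiplying `u` repeatedly by suitable elements
eventually lands in `Ann(N) \ {0}`: there is `z ≠ 0` in `Ann(N)` with `z = u` or `z = u v`.
As `Ann(N)` is a line on which `ω` does not vanish, `ω z ≠ 0`. The case `z = u` contradicts
`u ∈ ker ω`. Otherwise write `v = φ y + c a` with `a ∈ Ann(N)`, using `N = ker ω ⊕ ℂ a`;
then `z = φ x φ y`, and `ω z ≠ 0` means that `x` is not in the radical of the form.
-/

open Finset

open Module

lemma mul_mem_npow_succ_s9 {N : Type*} [NonUnitalCommRing N] [Module ℂ N]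
    {k : ℕ} {w : N} (hw : w ∈ npow N k) (v : N) : w * v ∈ npow N (k + 1) := by
  cases k with
  | zero => exact Submodule.mem_top
  | succ k => exact Submodule.subset_span ⟨v, w, hw, mul_comm w v⟩

lemma exists_mem_annN_ne_zero_of_mem_npow {N : Type*} [NonUnitalCommRing N] [Module ℂ N]
    [IsScalarTower ℂ N N] (n : ℕ) :
    ∀ {k : ℕ} {w : N}, npow N (k + n) = ⊥ → w ∈ npow N k → w ≠ 0 →
      ∃ z ∈ annN N, z ≠ 0 ∧ (z = w ∨ ∃ v, z = w * v) := by
  induction n with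
  | zero =>
    intro k w hnil hw hw0
    rw [add_zero] at hnil
    rw [hnil] at hw
    exact absurd ((Submodule.mem_bot ℂ).mp hw) hw0
  | succ n ih =>
    intro k w hnil hw hw0
    by_cases hwA : w ∈ annN N
    · exact ⟨w, hwA, hw0, Or.inl rfl⟩
    obtain ⟨v, hv⟩ : ∃ v, w * v ≠ 0 := not_forall.mp hwA
    obtain ⟨z, hzA, hz0, hz⟩ :=
      ih (by rwa [add_assoc, add_comm 1 n]) (mul_mem_npow_succ_s9 hw v) hv
    refine ⟨z, hzA, hz0, Or.inr ?_⟩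
    rcases hz with rfl | ⟨v', rfl⟩
    · exact ⟨v, rfl⟩
    · exact ⟨v * v', mul_assoc w v v'⟩

lemma exists_mem_annN_ne_zero_mul {N : Type*} [NonUnitalCommRing N] [Module ℂ N]
    [IsScalarTower ℂ N N] {ν : ℕ} (hnil : npow N (ν + 1) = ⊥) {w : N} (hw0 : w ≠ 0) :
    ∃ z ∈ annN N, z ≠ 0 ∧ (z = w ∨ ∃ v, z = w * v) :=
  exists_mem_annN_ne_zero_of_mem_npow (ν + 1) (by rwa [zero_add]) Submodule.mem_top hw0

lemma LinearMap.apply_ne_zero_of_finrank_eq_one {K V : Type*} [Field K] [AddCommGroup V]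
    [Module K V] {p : Submodule K V} (hp : finrank K p = 1) (f : V →ₗ[K] K)
    (hf : ∃ a ∈ p, f a ≠ 0) {z : V} (hz : z ∈ p) (hz0 : z ≠ 0) : f z ≠ 0 := by
  obtain ⟨a, ha, hfa⟩ := hf
  obtain ⟨c, hc⟩ :=
    (finrank_eq_one_iff_of_nonzero' ⟨z, hz⟩ (by simpa using hz0)).mp hp ⟨a, ha⟩
  have hac : a = c • z := by simpa using hc.symm
  intro hfz
  exact hfa (by rw [hac, map_smul, hfz, smul_zero])

lemma exists_eq_add_smul_of_range_eq_ker {K V W : Type*} [Field K] [AddCommGroup V]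
    [Module K V] [AddCommGroup W] [Module K W] {φ : W →ₗ[K] V} {f : V →ₗ[K] K}
    (hrange : LinearMap.range φ = LinearMap.ker f) {a : V} (ha : f a ≠ 0) (v : V) :
    ∃ (y : W) (c : K), v = φ y + c • a := by
  have hker : v - (f v / f a) • a ∈ LinearMap.range φ := by
    rw [hrange, LinearMap.mem_ker, map_sub, map_smul, smul_eq_mul, div_mul_cancel₀ _ ha,
      sub_self]
  obtain ⟨y, hy⟩ := hker
  exact ⟨y, f v / f a, by rw [hy, sub_add_cancel]⟩

theorem stmt9_general (N : Type*) [NonUnitalCommRing N] [Module ℂ N]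
    [IsScalarTower ℂ N N]
    (ν : ℕ) (hnil : npow N (ν + 1) = ⊥) (hann : Module.finrank ℂ (annN N) = 1)
    (W : Type*) [AddCommGroup W] [Module ℂ W]
    (ω : N →ₗ[ℂ] ℂ) (hω : ∃ a ∈ annN N, ω a ≠ 0)
    (φ : W →ₗ[ℂ] N) (hinj : Function.Injective φ)
    (hrange : LinearMap.range φ = LinearMap.ker ω) :
    ∀ x : W, (∀ y : W, ω (φ x * φ y) = 0) → x = 0 := by
  intro x hx
  by_contra hx0
  have hu0 : φ x ≠ 0 := (map_ne_zero_iff φ hinj).mpr hx0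
  obtain ⟨z, hzA, hz0, hz⟩ := exists_mem_annN_ne_zero_mul hnil hu0
  have hωz : ω z ≠ 0 := ω.apply_ne_zero_of_finrank_eq_one hann hω hzA hz0
  rcases hz with rfl | ⟨v, rfl⟩
  · exact hωz (by rw [← LinearMap.mem_ker, ← hrange]; exact ⟨x, rfl⟩)
  obtain ⟨a, haA, hωa⟩ := hω
  obtain ⟨y, c, rfl⟩ := exists_eq_add_smul_of_range_eq_ker hrange hωa v
  have hua : φ x * (c • a) = 0 := by
    rw [mul_comm]; exact Submodule.smul_mem _ c haA (φ x)
  rw [mul_add, hua, add_zero] at hωz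
  exact hωz (hx y)

/-- For a nil-polynomial `P = ω ∘ exp₂ ∘ φ` arising from an admissible
algebra `N` (ω : N → ℂ linear with ω(Ann N) = ℂ, φ : W → ker ω a linear isomorphism),
the quadratic form `P^{[2]}` is non-degenerate on `W`; i.e. the symmetric bilinear form
`(x,y) ↦ ω(φ(x)φ(y))` is non-degenerate. -/
theorem stmt9 (N : Type*) [NonUnitalCommRing N] [Module ℂ N] [SMulCommClass ℂ N N]
    [IsScalarTower ℂ N N] [FiniteDimensional ℂ N]
    (ν : ℕ) (hnil : npow N (ν + 1) = ⊥) (hann : Module.finrank ℂ (annN N) = 1)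
    (W : Type*) [AddCommGroup W] [Module ℂ W] [FiniteDimensional ℂ W]
    (ω : N →ₗ[ℂ] ℂ) (hω : ∃ a ∈ annN N, ω a ≠ 0)
    (φ : W →ₗ[ℂ] N) (hinj : Function.Injective φ)
    (hrange : LinearMap.range φ = LinearMap.ker ω) :
    ∀ x : W, (∀ y : W, ω (φ x * φ y) = 0) → x = 0 :=
  stmt9_general N ν hnil hann W ω hω φ hinj hrange
end

section
/- Let P be a nil-polynomial on W arising from (N, ω, φ), with symmetric ℓ-linear forms ω_ℓ(x¹,…,x^ℓ) = ω(φ(x¹)⋯φ(x^ℓ)), and let x·y be the commutative product on W defined by ω₂(x·y, z) = ω₃(x,y,z). Then for every ℓ ≥ 2 and all x¹,…,x^{ℓ+1} ∈ W: ω_{ℓ+1}(x¹,…,x^{ℓ+1}) = ω_ℓ(x¹·x², x³,…,x^{ℓ+1}). -/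
open Finset

/-
The hypothesis `ω₂(x·y, z) = ω₃(x, y, z)` only pairs `φ(x·y)` and `φ(x)φ(y)` against `ker ω = φ(W)`.
Since `ker ω` is a hyperplane and `ω` does not vanish on `Ann(N)`, every `b ∈ N` is `φ(z) + c a` with
`a ∈ Ann(N)`, and the term `c a` is killed by multiplication; so the two elements pair equally against
all of `N`, in particular against the product `φ(x³)⋯φ(x^{ℓ+1})`.
-/

section Pairing

variable {𝕜 N W : Type*} [Field 𝕜] [NonUnitalCommRing N] [Module 𝕜 N] [AddCommGroup W]
  [Module 𝕜 W] {ω : N →ₗ[𝕜] 𝕜} {φ : W →ₗ[𝕜] N} {a : N}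

theorem exists_eq_add_smul_of_range_eq_ker_s12 (hrange : LinearMap.range φ = LinearMap.ker ω)
    (hωa : ω a ≠ 0) (b : N) : ∃ z : W, ∃ c : 𝕜, b = φ z + c • a := by
  have hker : b - (ω b / ω a) • a ∈ LinearMap.range φ := by
    simp [hrange, LinearMap.mem_ker, hωa]
  obtain ⟨z, hz⟩ := hker
  exact ⟨z, ω b / ω a, by rw [hz, sub_add_cancel]⟩

theorem apply_mul_eq_of_forall_apply_mul_range [SMulCommClass 𝕜 N N]
    (hrange : LinearMap.range φ = LinearMap.ker ω) (ha : ∀ v : N, a * v = 0) (hωa : ω a ≠ 0)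
    {u u' : N} (h : ∀ z : W, ω (u * φ z) = ω (u' * φ z)) (b : N) : ω (u * b) = ω (u' * b) := by
  obtain ⟨z, c, rfl⟩ := exists_eq_add_smul_of_range_eq_ker_s12 hrange hωa b
  simp only [mul_add, mul_smul_comm, mul_comm _ a, ha, smul_zero, add_zero, h]

end Pairing

namespace Unitization

variable {R A : Type*} [CommSemiring R] [NonUnitalCommSemiring A] [Module R A]
  [IsScalarTower R A A] [SMulCommClass R A A]

theorem prod_inr_eq_inr_snd {ι : Type*} {s : Finset ι} (hs : s.Nonempty) (f : ι → A) :
    ∏ i ∈ s, (f i : Unitization R A) = ((∏ i ∈ s, (f i : Unitization R A)).snd : A) := by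
  have hfst : (∏ i ∈ s, (f i : Unitization R A)).fst = 0 := by
    rw [← fstHom_apply (R := R), map_prod]
    exact prod_eq_zero hs.choose_spec (fst_inr R (f hs.choose))
  rw [← inl_fst_add_inr_snd_eq (∏ i ∈ s, (f i : Unitization R A)), hfst, inl_zero, zero_add, snd_inr]

end Unitization

theorem stmt12_general (N : Type*) [NonUnitalCommRing N] [Module ℂ N] [SMulCommClass ℂ N N]
    [IsScalarTower ℂ N N]
    (W : Type*) [AddCommGroup W] [Module ℂ W]
    (ω : N →ₗ[ℂ] ℂ) (hω : ∃ a ∈ annN N, ω a ≠ 0)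
    (φ : W →ₗ[ℂ] N)
    (hrange : LinearMap.range φ = LinearMap.ker ω)
    (mul : W → W → W)
    (hmul : ∀ x y z : W, ω (φ (mul x y) * φ z) = ω (φ x * φ y * φ z)) :
    ∀ (ℓ : ℕ), 2 ≤ ℓ → ∀ x : ℕ → W,
      ω ((∏ i ∈ Finset.range (ℓ + 1),
            (Unitization.inr (φ (x i)) : Unitization ℂ N)).snd)
        = ω (((Unitization.inr (φ (mul (x 0) (x 1))) : Unitization ℂ N)
            * ∏ i ∈ Finset.Ico 2 (ℓ + 1),
                (Unitization.inr (φ (x i)) : Unitization ℂ N)).snd) := by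
  intro ℓ hℓ x
  obtain ⟨a, ha, hωa⟩ := hω
  have hpair : ∀ b : N, ω (φ (mul (x 0) (x 1)) * b) = ω (φ (x 0) * φ (x 1) * b) :=
    apply_mul_eq_of_forall_apply_mul_range hrange ha hωa (hmul _ _)
  rw [← prod_range_mul_prod_Ico _ (by omega : 2 ≤ ℓ + 1), prod_range_succ, prod_range_one,
    Unitization.prod_inr_eq_inr_snd (nonempty_Ico.2 (by omega)), ← Unitization.inr_mul,
    ← Unitization.inr_mul, ← Unitization.inr_mul, Unitization.snd_inr, Unitization.snd_inr,
    hpair]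

/-- Recursion formula: with `ω_ℓ(x¹,…,x^ℓ) = ω(φ(x¹)⋯φ(x^ℓ))` and the
product `x·y` on `W` defined by `ω₂(x·y,z) = ω₃(x,y,z)`, for every `ℓ ≥ 2` and all
`x¹,…,x^{ℓ+1} ∈ W`: `ω_{ℓ+1}(x¹,…,x^{ℓ+1}) = ω_ℓ(x¹·x², x³,…,x^{ℓ+1})`.
(Products of elements of `N` are computed in the unital extension `Unitization ℂ N`,
whose `N`-component is extracted by `Unitization.snd`.) -/
theorem stmt12 (N : Type*) [NonUnitalCommRing N] [Module ℂ N] [SMulCommClass ℂ N N]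
    [IsScalarTower ℂ N N] [FiniteDimensional ℂ N]
    (ν : ℕ) (hnil : npow N (ν + 1) = ⊥) (hann : Module.finrank ℂ (annN N) = 1)
    (W : Type*) [AddCommGroup W] [Module ℂ W] [FiniteDimensional ℂ W]
    (ω : N →ₗ[ℂ] ℂ) (hω : ∃ a ∈ annN N, ω a ≠ 0)
    (φ : W →ₗ[ℂ] N) (hinj : Function.Injective φ)
    (hrange : LinearMap.range φ = LinearMap.ker ω)
    (mul : W → W → W)
    (hmul : ∀ x y z : W, ω (φ (mul x y) * φ z) = ω (φ x * φ y * φ z)) :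
    ∀ (ℓ : ℕ), 2 ≤ ℓ → ∀ x : ℕ → W,
      ω ((∏ i ∈ Finset.range (ℓ + 1),
            (Unitization.inr (φ (x i)) : Unitization ℂ N)).snd)
        = ω (((Unitization.inr (φ (mul (x 0) (x 1))) : Unitization ℂ N)
            * ∏ i ∈ Finset.Ico 2 (ℓ + 1),
                (Unitization.inr (φ (x i)) : Unitization ℂ N)).snd) :=
  stmt12_general N W ω hω φ hrange mul hmul
end
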